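/- Let α ∈ R_+, j > 0, and α̃ = [−α, ν_α j] ∈ R̃_+; fix ⋄ ∈ {sht,lng}. Then λ_{ν_⋄}(s_α̃) = {[−β, ν_β k] ∈ R̃_+ : β ∈ R, ν_β = ν_⋄, 0 ≤ ν_β k < (α,β)j} ∪ {[−β, (α,β)j] : β ∈ R_+, ν_β = ν_⋄, (α,β) > 0, s_α(β) ∈ R_+}. Equivalently, λ_{ν_⋄}(s_α̃) = λ_{ν_⋄}(−jα) ∖ {[−β, (α,β)j] : β ∈ λ_{ν_⋄}(s_α)}, where −jα = s_α̃ s_α ∈ Ŵ is the translation by the weight −jα. -/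
import Mathlib


open scoped RealInnerProductSpace Classical

noncomputable section

/-- Euclidean space ℝⁿ. -/
abbrev EV (n : ℕ) := EuclideanSpace ℝ (Fin n)

/-- ν_α = (α,α)/2. -/
def nuu {n : ℕ} (α : EV n) : ℝ := ⟪α, α⟫ / 2

/-- α^∨ = 2α/(α,α). -/
def coroot {n : ℕ} (α : EV n) : EV n := (2 / ⟪α, α⟫) • α

/-- the reflection s_α. -/
def srefl {n : ℕ} (α : EV n) : EV n → EV n :=
  fun z => z - (2 * ⟪z, α⟫ / ⟪α, α⟫) • α

/-- the affine reflection s_ã attached to ã = [α, ν_α j], acting linearly on ℝⁿ × ℝ. -/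
def aRefl {n : ℕ} (p : EV n × ℝ) : EV n × ℝ → EV n × ℝ :=
  fun z => z - (2 * ⟪z.1, p.1⟫ / ⟪p.1, p.1⟫) • p

/-- the translation element b' ∈ Ŵ, b'([z,ζ]) = [z, ζ − (z,b)]. -/
def transl {n : ℕ} (b : EV n) : EV n × ℝ → EV n × ℝ :=
  fun z => (z.1, z.2 - ⟪z.1, b⟫)

/-- extension of a nonaffine transformation to ℝⁿ × ℝ. -/
def affExt {n : ℕ} (w : EV n → EV n) : EV n × ℝ → EV n × ℝ :=
  fun z => (w z.1, z.2)

/-- An irreducible reduced crystallographic root system in ℝⁿ, with a fixed system of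
positive/simple roots, normalized so that (α,α) = 2 for short roots; `hishort` is the
highest short root ϑ and `hiroot` the highest root θ. -/
structure RootCtx (n : ℕ) where
  R : Finset (EV n)
  pos : Finset (EV n)
  simple : Fin n → EV n
  hishort : EV n
  hiroot : EV n
  nonzero : ∀ α ∈ R, α ≠ (0 : EV n)
  neg_mem : ∀ α ∈ R, -α ∈ R
  reduced : ∀ α ∈ R, ∀ t : ℝ, t • α ∈ R → t = 1 ∨ t = -1
  crys : ∀ α ∈ R, ∀ β ∈ R, ∃ m : ℤ, 2 * ⟪β, α⟫ / ⟪α, α⟫ = (m : ℝ)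
  reflect_mem : ∀ α ∈ R, ∀ β ∈ R, β - (2 * ⟪β, α⟫ / ⟪α, α⟫) • α ∈ R
  span_top : Submodule.span ℝ (R : Set (EV n)) = ⊤
  pos_subset : pos ⊆ R
  pos_iff : ∀ α ∈ R, (α ∈ pos ↔ -α ∉ pos)
  simple_pos : ∀ i, simple i ∈ pos
  simple_inj : Function.Injective simple
  pos_sum : ∀ α ∈ pos, ∃ f : Fin n → ℕ, α = ∑ i, (f i : ℝ) • simple i
  irred : ∀ S : Finset (EV n), S ⊆ R → S.Nonempty →
      (∀ α ∈ S, ∀ β ∈ R, β ∉ S → ⟪α, β⟫ = 0) → S = R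
  normalized : ∀ α ∈ R, (∀ β ∈ R, ⟪α, α⟫ ≤ ⟪β, β⟫) → ⟪α, α⟫ = 2
  hishort_pos : hishort ∈ pos
  hishort_short : ⟪hishort, hishort⟫ = 2
  hishort_high : ∀ α ∈ R, ⟪α, α⟫ = 2 →
      ∃ f : Fin n → ℕ, hishort - α = ∑ i, (f i : ℝ) • simple i
  hiroot_pos : hiroot ∈ pos
  hiroot_high : ∀ α ∈ R, ∃ f : Fin n → ℕ, hiroot - α = ∑ i, (f i : ℝ) • simple i

namespace RootCtx

variable {n : ℕ} (c : RootCtx n)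

/-- word in the simple reflections of W; the letters are listed in the order of
application (the first letter of the list acts first), so `[i₁, …, i_l]`
represents s_{i_l} ⋯ s_{i_1}. -/
def wWord (L : List (Fin n)) : EV n → EV n :=
  L.foldl (fun f i => srefl (c.simple i) ∘ f) id

/-- membership in the Weyl group W. -/
def IsWeyl (w : EV n → EV n) : Prop := ∃ L : List (Fin n), w = c.wWord L

/-- λ(w) = {α ∈ R₊ : w(α) ∈ R₋}. -/
def lamW (w : EV n → EV n) : Finset (EV n) :=
  c.pos.filter (fun α => -(w α) ∈ c.pos)

/-- λ_ν(w). -/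
def lamWnu (w : EV n → EV n) (ν : ℝ) : Finset (EV n) :=
  (c.lamW w).filter (fun α => nuu α = ν)

/-- the length l(w) = |λ(w)| of w ∈ W. -/
def lenW (w : EV n → EV n) : ℕ := (c.lamW w).card

/-- ρ_ν = (1/2) Σ_{α ∈ R₊, ν_α = ν} α. -/
def rho (ν : ℝ) : EV n :=
  (1 / 2 : ℝ) • ∑ α ∈ c.pos.filter (fun α => nuu α = ν), α

/-- ρ_ν^∨ = ρ_ν / ν. -/
def rhoCheck (ν : ℝ) : EV n := ν⁻¹ • c.rho ν

/-- the affine root system R̃ ⊂ ℝⁿ × ℝ. -/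
def aR : Set (EV n × ℝ) := {p | ∃ α ∈ c.R, ∃ j : ℤ, p = (α, nuu α * j)}

/-- positive affine roots. -/
def aPos : Set (EV n × ℝ) :=
  {p | p ∈ c.aR ∧ (0 < p.2 ∨ (p.2 = 0 ∧ p.1 ∈ c.pos))}

/-- negative affine roots. -/
def aNeg : Set (EV n × ℝ) := {p | -p ∈ c.aPos}

/-- the affine simple roots α_0, α_1, …, α_n; the index 0 corresponds to
α₀ = [−ϑ, 1]. -/
def asimple : Fin (n + 1) → EV n × ℝ :=
  fun i => if h : i = 0 then (-c.hishort, (1 : ℝ)) else (c.simple (i.pred h), (0 : ℝ))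

/-- the affine simple reflections s_0, s_1, …, s_n. -/
def aS (i : Fin (n + 1)) : EV n × ℝ → EV n × ℝ := aRefl (c.asimple i)

/-- word in the affine simple reflections (letters in order of application). -/
def affWord (L : List (Fin (n + 1))) : EV n × ℝ → EV n × ℝ :=
  L.foldl (fun f i => c.aS i ∘ f) id

/-- the weight lattice P. -/
def PwSet : Set (EV n) :=
  {b | ∀ i, ∃ m : ℤ, 2 * ⟪b, c.simple i⟫ / ⟪c.simple i, c.simple i⟫ = (m : ℝ)}

/-- the dominant weights P₊. -/
def PplusSet : Set (EV n) :=
  {b | b ∈ c.PwSet ∧ ∀ i, 0 ≤ ⟪b, c.simple i⟫}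

/-- membership in the extended affine Weyl group Ŵ = W ⋉ P,
via the normal form w·b' with w ∈ W and b ∈ P. -/
def IsExtW (f : EV n × ℝ → EV n × ℝ) : Prop :=
  ∃ w b, c.IsWeyl w ∧ b ∈ c.PwSet ∧ f = affExt w ∘ transl b

/-- membership in Π = {π ∈ Ŵ : π(R̃₊) = R̃₊}. -/
def IsPi (f : EV n × ℝ → EV n × ℝ) : Prop :=
  c.IsExtW f ∧ f '' c.aPos = c.aPos

/-- the λ-set λ(ŵ) = R̃₊ ∩ ŵ⁻¹(R̃₋) of an affine transformation. -/
def aLam (f : EV n × ℝ → EV n × ℝ) : Set (EV n × ℝ) :=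
  {p | p ∈ c.aPos ∧ f p ∈ c.aNeg}

/-- the ν-part λ_ν(ŵ). -/
def aLamNu (f : EV n × ℝ → EV n × ℝ) (ν : ℝ) : Set (EV n × ℝ) :=
  {p | p ∈ c.aLam f ∧ nuu p.1 = ν}

/-- the length l(ŵ) = |λ(ŵ)|. -/
def aLen (f : EV n × ℝ → EV n × ℝ) : ℕ := (c.aLam f).ncard

/-- `(π, L)` is a reduced decomposition ŵ = π_r s_{i_l} ⋯ s_{i_1}: π ∈ Π and
the word length is minimal among all such presentations of the same element. -/
def IsReducedA (π : EV n × ℝ → EV n × ℝ) (L : List (Fin (n + 1))) : Prop :=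
  c.IsPi π ∧
    ∀ (π' : EV n × ℝ → EV n × ℝ) (L' : List (Fin (n + 1))),
      c.IsPi π' → π' ∘ c.affWord L' = π ∘ c.affWord L → L.length ≤ L'.length

/-- the λ-sequence α̃¹, α̃², … of a word (0-based indexing):
α̃^{k+1} = s_{i_1} s_{i_2} ⋯ s_{i_k}(α_{i_{k+1}}). -/
def lamSeq (L : List (Fin (n + 1))) (k : Fin L.length) : EV n × ℝ :=
  ((L.take k).foldr (fun i f => c.aS i ∘ f) id) (c.asimple (L.get k))

/-- the λ-sequence of a word in W (0-based indexing). -/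
def lamSeqW (L : List (Fin n)) (k : Fin L.length) : EV n :=
  ((L.take k).foldr (fun i f => srefl (c.simple i) ∘ f) id) (c.simple (L.get k))

end RootCtx


namespace RootCtx
variable {n : ℕ} (c : RootCtx n)

lemma inner_self_pos_of_mem {α : EV n} (h : α ∈ c.R) : 0 < ⟪α, α⟫ := by
  rcases lt_or_eq_of_le (real_inner_self_nonneg (x := α)) with h' | h'
  · exact h'
  · exact absurd (inner_self_eq_zero.mp h'.symm) (c.nonzero α h)

lemma nuu_pos_of_mem {α : EV n} (h : α ∈ c.R) : 0 < nuu α := by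
  have := c.inner_self_pos_of_mem h; unfold nuu; linarith

lemma nuu_neg' (α : EV n) : nuu (-α) = nuu α := by simp [nuu]

lemma srefl_neg' (α z : EV n) : srefl α (-z) = -(srefl α z) := by
  unfold srefl; rw [inner_neg_left]; module

lemma nuu_srefl {α : EV n} (hα : ⟪α, α⟫ ≠ 0) (z : EV n) : nuu (srefl α z) = nuu z := by
  unfold nuu srefl
  have h2 : ⟪α, z⟫ = ⟪z, α⟫ := real_inner_comm z α
  simp only [inner_sub_left, inner_sub_right, real_inner_smul_left, real_inner_smul_right, h2]
  generalize ⟪z, z⟫ = A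
  generalize ⟪z, α⟫ = B
  generalize hC : ⟪α, α⟫ = C at hα ⊢
  field_simp
  ring

lemma srefl_mem {α : EV n} (hα : α ∈ c.R) {β : EV n} (hβ : β ∈ c.R) :
    srefl α β ∈ c.R := c.reflect_mem α hα β hβ

end RootCtx
namespace RootCtx
variable {n : ℕ} (c : RootCtx n)

lemma simple_li : LinearIndependent ℝ c.simple := by
  apply linearIndependent_of_top_le_span_of_card_eq_finrank
  · rw [← c.span_top]
    apply Submodule.span_le.mpr
    intro x hx
    have hx' : x ∈ c.R := hx
    have key : ∀ y ∈ c.pos, y ∈ Submodule.span ℝ (Set.range c.simple) := by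
      intro y hy
      obtain ⟨f, hf⟩ := c.pos_sum y hy
      rw [hf]
      exact Submodule.sum_mem _ fun i _ =>
        Submodule.smul_mem _ _ (Submodule.subset_span ⟨i, rfl⟩)
    by_cases h : x ∈ c.pos
    · exact key x h
    · have : -x ∈ c.pos := by
        by_contra h2
        exact h (((c.pos_iff x hx').mpr) h2)
      have := key (-x) this
      simpa using Submodule.neg_mem _ this
  · simp [finrank_euclideanSpace_fin]

lemma pos_of_nonneg_comb {δ : EV n} (hδ : δ ∈ c.R) (t : Fin n → ℝ)
    (ht : ∀ i, 0 ≤ t i) (h : δ = ∑ i, t i • c.simple i) : δ ∈ c.pos := by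
  by_contra hp
  have hneg : -δ ∈ c.pos := by
    by_contra h2
    exact hp (((c.pos_iff δ hδ).mpr) h2)
  obtain ⟨g, hg⟩ := c.pos_sum (-δ) hneg
  have hz : ∑ i, (t i + (g i : ℝ)) • c.simple i = 0 := by
    simp only [add_smul, Finset.sum_add_distrib, ← h, ← hg]
    abel
  have hli := Fintype.linearIndependent_iff.mp c.simple_li (fun i => t i + (g i : ℝ)) hz
  have hz2 : ∀ i, t i = 0 := fun i => by
    have h1 : t i + (g i : ℝ) = 0 := hli i
    have h2 : (0:ℝ) ≤ g i := Nat.cast_nonneg _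
    linarith [ht i]
  apply c.nonzero δ hδ
  rw [h]
  simp [hz2]

lemma srefl_pos_of_inner_neg {α γ : EV n} (hα : α ∈ c.pos) (hγ : γ ∈ c.pos)
    (hin : ⟪γ, α⟫ < 0) : srefl α γ ∈ c.pos := by
  have hαR := c.pos_subset hα
  have hγR := c.pos_subset hγ
  have hmem : srefl α γ ∈ c.R := c.srefl_mem hαR hγR
  obtain ⟨f, hf⟩ := c.pos_sum γ hγ
  obtain ⟨g, hg⟩ := c.pos_sum α hα
  have hipos := c.inner_self_pos_of_mem hαR
  set cc : ℝ := -(2 * ⟪γ, α⟫ / ⟪α, α⟫) with hcc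
  have hccpos : 0 < cc := by
    rw [hcc]
    have h2 : 2 * ⟪γ, α⟫ / ⟪α, α⟫ < 0 := div_neg_of_neg_of_pos (by linarith) hipos
    linarith
  apply c.pos_of_nonneg_comb hmem (fun i => (f i : ℝ) + cc * (g i : ℝ))
  · intro i
    have : (0:ℝ) ≤ f i := Nat.cast_nonneg _
    have : (0:ℝ) ≤ g i := Nat.cast_nonneg _
    positivity
  · show γ - (2 * ⟪γ, α⟫ / ⟪α, α⟫) • α = _
    have key : γ - (2 * ⟪γ, α⟫ / ⟪α, α⟫) • α = γ + cc • α := by rw [hcc]; module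
    rw [key, hf, hg, Finset.smul_sum, ← Finset.sum_add_distrib]
    exact Finset.sum_congr rfl fun i _ => by rw [add_smul, mul_smul]

end RootCtx
namespace RootCtx
variable {n : ℕ} (c : RootCtx n)

lemma srefl_zero_inner {α β : EV n} (h : ⟪β, α⟫ = 0) : srefl α β = β := by
  simp [srefl, h]

lemma inner_pos_of_srefl_notpos {α β : EV n} (hα : α ∈ c.pos) (hβ : β ∈ c.pos)
    (h : srefl α β ∉ c.pos) : 0 < ⟪α, β⟫ := by
  by_contra hle
  push_neg at hle
  rcases lt_or_eq_of_le hle with hlt | heq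
  · exact h (c.srefl_pos_of_inner_neg hα hβ (by rw [real_inner_comm]; exact hlt))
  · rw [srefl_zero_inner (by rw [real_inner_comm]; exact heq)] at h
    exact h hβ

lemma intcoef {γ : EV n} (hγ : γ ∈ c.R) {α : EV n} (hα : α ∈ c.R) :
    ∃ m : ℤ, ⟪γ, α⟫ = nuu γ * m := by
  obtain ⟨m, hm⟩ := c.crys γ hγ α hα
  refine ⟨m, ?_⟩
  have h2 := c.inner_self_pos_of_mem hγ
  rw [real_inner_comm α γ]
  rw [div_eq_iff (by positivity)] at hm
  unfold nuu
  linarith [hm]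

lemma aPos_fst_mem {p : EV n × ℝ} (h : p ∈ c.aPos) :
    p.1 ∈ c.R ∧ ∃ k : ℤ, p.2 = nuu p.1 * k := by
  obtain ⟨⟨γ, hγ, k, hp⟩, _⟩ := h
  subst hp
  exact ⟨hγ, k, rfl⟩

lemma aPos_snd_nonneg {p : EV n × ℝ} (h : p ∈ c.aPos) : 0 ≤ p.2 := by
  rcases h.2 with h' | h'
  · exact le_of_lt h'
  · exact le_of_eq h'.1.symm

lemma aRefl_neg_eq {α : EV n} (hα : ⟪α, α⟫ ≠ 0) (r : ℝ) (p : EV n × ℝ) :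
    aRefl (-α, nuu α * r) p = (srefl α p.1, p.2 + ⟪p.1, α⟫ * r) := by
  unfold aRefl srefl nuu
  have h1 : ⟪p.1, -α⟫ = -⟪p.1, α⟫ := inner_neg_right _ _
  have h2 : ⟪(-α : EV n), -α⟫ = ⟪α, α⟫ := by rw [inner_neg_neg]
  rw [Prod.ext_iff]
  constructor
  · show p.1 - _ • (-α) = _
    simp only [h1, h2]
    generalize ⟪p.1, α⟫ = B
    module
  · show p.2 - _ * (⟪α, α⟫ / 2 * r) = _
    simp only [h1, h2]
    generalize ⟪p.1, α⟫ = B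
    generalize hC : ⟪α, α⟫ = C at hα ⊢
    field_simp
    ring

lemma transl_neg_eq (α : EV n) (r : ℝ) (p : EV n × ℝ) :
    transl (-(r • α)) p = (p.1, p.2 + ⟪p.1, α⟫ * r) := by
  unfold transl
  rw [inner_neg_right, real_inner_smul_right]
  ring_nf

end RootCtx
namespace RootCtx
variable {n : ℕ} (c : RootCtx n)

lemma mem_aNeg_iff (p : EV n × ℝ) : p ∈ c.aNeg ↔ -p ∈ c.aPos := Iff.rfl

lemma mem_aLamNu_refl_iff {α : EV n} (hα : α ∈ c.R) (j : ℤ) (ν : ℝ) (p : EV n × ℝ) :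
    p ∈ c.aLamNu (aRefl (-α, nuu α * (j : ℝ))) ν ↔
      p ∈ c.aPos ∧ nuu p.1 = ν ∧
        (p.2 + ⟪p.1, α⟫ * j < 0 ∨ (p.2 + ⟪p.1, α⟫ * j = 0 ∧ -(srefl α p.1) ∈ c.pos)) := by
  have hαα : ⟪α, α⟫ ≠ 0 := ne_of_gt (c.inner_self_pos_of_mem hα)
  constructor
  · rintro ⟨⟨hpos, hneg⟩, hnu⟩
    refine ⟨hpos, hnu, ?_⟩
    rw [mem_aNeg_iff, aRefl_neg_eq hαα] at hneg
    obtain ⟨_, hsign⟩ := hneg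
    rcases hsign with h' | h'
    · left
      have h2 : (0:ℝ) < -(p.2 + ⟪p.1, α⟫ * j) := h'
      linarith
    · right
      have h2 : -(p.2 + ⟪p.1, α⟫ * j) = 0 := h'.1
      exact ⟨by linarith, h'.2⟩
  · rintro ⟨hpos, hnu, hcase⟩
    obtain ⟨hp1R, k, hk⟩ := c.aPos_fst_mem hpos
    obtain ⟨m, hm⟩ := c.intcoef hp1R hα
    refine ⟨⟨hpos, ?_⟩, hnu⟩
    rw [mem_aNeg_iff, aRefl_neg_eq hαα]
    refine ⟨?_, ?_⟩
    · refine ⟨-(srefl α p.1), c.neg_mem _ (c.srefl_mem hα hp1R), -(k + m * j), ?_⟩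
      rw [Prod.ext_iff]
      refine ⟨rfl, ?_⟩
      show -(p.2 + ⟪p.1, α⟫ * j) = nuu (-(srefl α p.1)) * ((-(k + m * j) : ℤ) : ℝ)
      rw [nuu_neg', nuu_srefl hαα, hk, hm]
      push_cast
      ring
    · rcases hcase with h | h
      · left; show (0:ℝ) < -(p.2 + ⟪p.1, α⟫ * j); linarith
      · exact Or.inr ⟨show -(p.2 + ⟪p.1, α⟫ * j) = (0:ℝ) by rw [h.1]; ring, h.2⟩

lemma mem_aLamNu_transl_iff {α : EV n} (hα : α ∈ c.R) (j : ℤ) (ν : ℝ) (p : EV n × ℝ) :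
    p ∈ c.aLamNu (transl (-((j : ℝ) • α))) ν ↔
      p ∈ c.aPos ∧ nuu p.1 = ν ∧
        (p.2 + ⟪p.1, α⟫ * j < 0 ∨ (p.2 + ⟪p.1, α⟫ * j = 0 ∧ -p.1 ∈ c.pos)) := by
  constructor
  · rintro ⟨⟨hpos, hneg⟩, hnu⟩
    refine ⟨hpos, hnu, ?_⟩
    rw [mem_aNeg_iff, transl_neg_eq] at hneg
    obtain ⟨_, hsign⟩ := hneg
    rcases hsign with h' | h'
    · left
      have h2 : (0:ℝ) < -(p.2 + ⟪p.1, α⟫ * j) := h'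
      linarith
    · right
      have h2 : -(p.2 + ⟪p.1, α⟫ * j) = 0 := h'.1
      exact ⟨by linarith, h'.2⟩
  · rintro ⟨hpos, hnu, hcase⟩
    obtain ⟨hp1R, k, hk⟩ := c.aPos_fst_mem hpos
    obtain ⟨m, hm⟩ := c.intcoef hp1R hα
    refine ⟨⟨hpos, ?_⟩, hnu⟩
    rw [mem_aNeg_iff, transl_neg_eq]
    refine ⟨?_, ?_⟩
    · refine ⟨-p.1, c.neg_mem _ hp1R, -(k + m * j), ?_⟩
      rw [Prod.ext_iff]
      refine ⟨rfl, ?_⟩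
      show -(p.2 + ⟪p.1, α⟫ * j) = nuu (-p.1) * ((-(k + m * j) : ℤ) : ℝ)
      rw [nuu_neg', hk, hm]
      push_cast
      ring
    · rcases hcase with h | h
      · left; show (0:ℝ) < -(p.2 + ⟪p.1, α⟫ * j); linarith
      · exact Or.inr ⟨show -(p.2 + ⟪p.1, α⟫ * j) = (0:ℝ) by rw [h.1]; ring, h.2⟩

end RootCtx
namespace RootCtx
variable {n : ℕ} (c : RootCtx n)

lemma key0 {α : EV n} (hα : α ∈ c.pos) {j : ℤ} (hj : 0 < j) {p : EV n × ℝ}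
    (hpos : p ∈ c.aPos) (h0 : p.2 + ⟪p.1, α⟫ * j = 0) (hsr : -(srefl α p.1) ∈ c.pos) :
    -p.1 ∈ c.pos ∧ 0 < ⟪α, -p.1⟫ ∧ srefl α (-p.1) ∈ c.pos ∧ p.2 = ⟪α, -p.1⟫ * j := by
  have hαR := c.pos_subset hα
  obtain ⟨hp1R, k, hk⟩ := c.aPos_fst_mem hpos
  have hneg : ⟪α, -p.1⟫ = -⟪p.1, α⟫ := by rw [inner_neg_right, real_inner_comm]
  have hjpos : (0:ℝ) < (j:ℝ) := by exact_mod_cast hj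
  rcases hpos.2 with h' | h'
  · -- 0 < p.2
    have hin : ⟪p.1, α⟫ < 0 := by nlinarith
    have hnp : -p.1 ∈ c.pos := by
      by_contra hnp
      have hp1pos : p.1 ∈ c.pos := (c.pos_iff p.1 hp1R).mpr hnp
      have := c.srefl_pos_of_inner_neg hα hp1pos hin
      exact ((c.pos_iff (srefl α p.1) (c.srefl_mem hαR hp1R)).mp this) hsr
    refine ⟨hnp, by rw [hneg]; linarith, ?_, by rw [hneg]; linarith⟩
    rw [srefl_neg']
    exact hsr
  · -- p.2 = 0 and p.1 ∈ pos : contradiction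
    exfalso
    have hin : ⟪p.1, α⟫ = 0 := by
      have : ⟪p.1, α⟫ * j = 0 := by linarith [h'.1]
      exact (mul_eq_zero.mp this).resolve_right (ne_of_gt hjpos)
    rw [srefl_zero_inner hin] at hsr
    exact ((c.pos_iff p.1 hp1R).mp h'.2) hsr

end RootCtx

open RootCtx in
/-- Lemma 1.3 (iii).  For α ∈ R₊, j > 0 and α̃ = [−α, ν_α j] ∈ R̃₊,
λ_{ν_⋄}(s_α̃) is described explicitly; equivalently it is
λ_{ν_⋄}(−jα) ∖ {[−β, (α,β)j] : β ∈ λ_{ν_⋄}(s_α)}. -/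
theorem aLam_negroot_reflection {n : ℕ} (c : RootCtx n)
    (α : EV n) (hα : α ∈ c.pos) (j : ℤ) (hj : 0 < j)
    (ν : ℝ) (hν : ∃ γ ∈ c.R, nuu γ = ν) :
    c.aLamNu (aRefl (-α, nuu α * j)) ν =
      ({p : EV n × ℝ | p ∈ c.aPos ∧ (-p.1) ∈ c.R ∧ nuu p.1 = ν ∧
          0 ≤ p.2 ∧ p.2 < ⟪α, -p.1⟫ * j} ∪
       {p : EV n × ℝ | ∃ β ∈ c.pos, nuu β = ν ∧ 0 < ⟪α, β⟫ ∧
          srefl α β ∈ c.pos ∧ p = (-β, ⟪α, β⟫ * j)}) ∧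
    c.aLamNu (aRefl (-α, nuu α * j)) ν =
      c.aLamNu (transl (-((j : ℝ) • α))) ν \
        {p : EV n × ℝ | ∃ β ∈ c.lamWnu (srefl α) ν, p = (-β, ⟪α, β⟫ * j)} := by
  have hαR := c.pos_subset hα
  have hαα : ⟪α, α⟫ ≠ 0 := ne_of_gt (c.inner_self_pos_of_mem hαR)
  have hjpos : (0:ℝ) < (j:ℝ) := by exact_mod_cast hj
  constructor
  · ext p
    rw [c.mem_aLamNu_refl_iff hαR j ν p]
    simp only [Set.mem_union, Set.mem_setOf_eq]
    constructor
    · rintro ⟨hpos, hnu, hcase⟩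
      obtain ⟨hp1R, k, hk⟩ := c.aPos_fst_mem hpos
      have hneg : ⟪α, -p.1⟫ = -⟪p.1, α⟫ := by rw [inner_neg_right, real_inner_comm]
      rcases hcase with h | h
      · left
        exact ⟨hpos, c.neg_mem _ hp1R, hnu, c.aPos_snd_nonneg hpos, by rw [hneg]; linarith⟩
      · right
        obtain ⟨hb1, hb2, hb3, hb4⟩ := c.key0 hα hj hpos h.1 h.2
        refine ⟨-p.1, hb1, by rw [nuu_neg']; exact hnu, hb2, hb3, ?_⟩
        rw [Prod.ext_iff]
        exact ⟨(neg_neg _).symm, hb4⟩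
    · rintro (⟨hpos, hnR, hnu, h0, hlt⟩ | ⟨β, hβ, hnuβ, hin, hsrefl, hpe⟩)
      · refine ⟨hpos, hnu, Or.inl ?_⟩
        have hneg : ⟪α, -p.1⟫ = -⟪p.1, α⟫ := by rw [inner_neg_right, real_inner_comm]
        rw [hneg, neg_mul] at hlt
        linarith
      · have hβR := c.pos_subset hβ
        obtain ⟨m, hm⟩ := c.intcoef hβR hαR
        subst hpe
        have hab : ⟪α, β⟫ = ⟪β, α⟫ := (real_inner_comm α β).symm
        refine ⟨⟨⟨-β, c.neg_mem _ hβR, m * j, ?_⟩, Or.inl (by positivity)⟩,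
          by show nuu (-β) = ν; rw [nuu_neg']; exact hnuβ, Or.inr ⟨?_, ?_⟩⟩
        · rw [Prod.ext_iff]
          refine ⟨rfl, ?_⟩
          show ⟪α, β⟫ * j = nuu (-β) * ((m * j : ℤ) : ℝ)
          rw [nuu_neg', hab, hm]
          push_cast
          ring
        · show ⟪α, β⟫ * j + ⟪(-β : EV n), α⟫ * j = 0
          rw [inner_neg_left, hab]
          ring
        · show -(srefl α (-β)) ∈ c.pos
          rw [srefl_neg', neg_neg]
          exact hsrefl
  · ext p
    rw [c.mem_aLamNu_refl_iff hαR j ν p]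
    simp only [Set.mem_diff, Set.mem_setOf_eq]
    constructor
    · rintro ⟨hpos, hnu, hcase⟩
      constructor
      · rw [c.mem_aLamNu_transl_iff hαR j ν p]
        refine ⟨hpos, hnu, ?_⟩
        rcases hcase with h | h
        · exact Or.inl h
        · exact Or.inr ⟨h.1, (c.key0 hα hj hpos h.1 h.2).1⟩
      · rintro ⟨β, hβmem, hpe⟩
        simp only [lamWnu, lamW, Finset.mem_filter] at hβmem
        obtain ⟨⟨hβpos, hβneg⟩, hnuβ⟩ := hβmem
        have hβR := c.pos_subset hβpos
        have hab : ⟪α, β⟫ = ⟪β, α⟫ := (real_inner_comm α β).symm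
        subst hpe
        have hzero : ⟪α, β⟫ * j + ⟪(-β : EV n), α⟫ * j = 0 := by
          rw [inner_neg_left, hab]; ring
        rcases hcase with h | h
        · have h' : ⟪α, β⟫ * (j:ℝ) + ⟪(-β : EV n), α⟫ * j < 0 := h
          linarith
        · have h2 : -(srefl α (-β)) ∈ c.pos := h.2
          rw [srefl_neg', neg_neg] at h2
          exact ((c.pos_iff (srefl α β) (c.srefl_mem hαR hβR)).mp h2) hβneg
    · rintro ⟨hmem, hS⟩
      rw [c.mem_aLamNu_transl_iff hαR j ν p] at hmem
      obtain ⟨hpos, hnu, hcase⟩ := hmem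
      refine ⟨hpos, hnu, ?_⟩
      rcases hcase with h | h
      · exact Or.inl h
      · right
        refine ⟨h.1, ?_⟩
        by_contra hno
        have hβR : -p.1 ∈ c.R := c.pos_subset h.2
        obtain ⟨hp1R, k, hk⟩ := c.aPos_fst_mem hpos
        have hsR : srefl α (-p.1) ∈ c.R := c.srefl_mem hαR hβR
        have hno' : srefl α (-p.1) ∉ c.pos := by
          rw [srefl_neg']
          exact hno
        have hlamb : -(srefl α (-p.1)) ∈ c.pos := by
          by_contra h3
          exact hno' ((c.pos_iff _ hsR).mpr h3)
        apply hS
        refine ⟨-p.1, ?_, ?_⟩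
        · simp only [lamWnu, lamW, Finset.mem_filter]
          exact ⟨⟨h.2, hlamb⟩, by rw [nuu_neg']; exact hnu⟩
        · rw [Prod.ext_iff]
          refine ⟨(neg_neg _).symm, ?_⟩
          show p.2 = ⟪α, -p.1⟫ * j
          have hneg : ⟪α, -p.1⟫ = -⟪p.1, α⟫ := by rw [inner_neg_right, real_inner_comm]
          rw [hneg]
          linarith [h.1]
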